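/- arXiv:1301.3262 — 4 statements merged into one kernel-verified Lean document; each statement's English description precedes it below -/
import Mathlib

section
/- Let p>1, let 0<L<p, and set λ_p=(1−L/p)^p. Let (a_n)_{n≥1} and (b_n)_{n≥1} be positive real sequences with a_1=b_1. Suppose that for every integer n≥1 the following condition holds: (λ_p^{1−1/p}·a_{n+1}/b_{n+1} + 1 − λ_p^{1−1/p})^{1/(p−1)} · ( (λ_p^{1−1/p}·a_n/b_n + 1 − λ_p − λ_p^{1−1/p})^{1/(p−1)} + (a_n/b_{n+1})^{p/(p−1)} ) ≤ (a_{n+1}/b_{n+1})^{p/(p−1)} · (λ_p^{1−1/p}·a_n/b_n + 1 − λ_p − λ_p^{1−1/p})^{1/(p−1)}. Then for every nonnegative real sequence (x_n)_{n≥1} with Σ_{n=1}^∞ x_n^p < ∞, one has Σ_{n=1}^∞ ( (1/a_n) Σ_{k=1}^n b_k x_k )^p ≤ (p/(p−L))^p Σ_{n=1}^∞ x_n^p. -/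
/-!
Schur's test with weights. For positive weights `P_k`, Hölder's inequality gives
`(∑_{k ≤ n} b_k x_k)^p ≤ (∑_{k ≤ n} x_k^p / P_k) (∑_{k ≤ n} b_k^{p/(p-1)} P_k^{1/(p-1)})^(p-1)`,
so once the last factor is at most `c a_n^p (P_n - P_{n+1})`, summation by parts bounds
`∑_n (a_n⁻¹ ∑_{k ≤ n} b_k x_k)^p` by `c ∑_n x_n^p`.

With `μ = λ^(1-1/p)` and `Λ_n = μ a_n / b_n + 1 - μ`, take `P_n = ∏_{m < n} (1 - λ / Λ_m)`, so that
`P_n - P_{n+1} = λ P_n / Λ_n`. The hypothesis on `(a_n, b_n)` is what propagates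
`∑_{k ≤ n} b_k^{p/(p-1)} P_k^{1/(p-1)} ≤ a_n^{p/(p-1)} (P_n / Λ_n)^{1/(p-1)}` from `n` to `n + 1`
(and forces `a_{n+1} > b_{n+1}`, hence `Λ_{n+1} > 1 > λ`); raised to the power `p - 1`, this is
the required bound with `c = 1 / λ = (p / (p - L))^p`.

Below, `λ` is `lp`, `Λ` is `Factorable.lam`, `P` is `Factorable.weight`, and the sequences of the
theorem are re-indexed to start at `0`.
-/

open Finset Real

theorem rpow_sum_mul_le_weighted {ι : Type*} (s : Finset ι) {p : ℝ} (hp : 1 < p) {b x w : ι → ℝ}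
    (hb : ∀ i ∈ s, 0 ≤ b i) (hx : ∀ i ∈ s, 0 ≤ x i) (hw : ∀ i ∈ s, 0 < w i) :
    (∑ i ∈ s, b i * x i) ^ p ≤
      (∑ i ∈ s, x i ^ p / w i) *
        (∑ i ∈ s, b i ^ (p / (p - 1)) * w i ^ (1 / (p - 1))) ^ (p - 1) := by
  have hp0 : 0 < p := by linarith
  have hsplit : ∀ i ∈ s, b i * x i = x i / w i ^ (1 / p) * (b i * w i ^ (1 / p)) := by
    intro i hi
    have := rpow_pos_of_pos (hw i hi) (1 / p)
    field_simp
  have hf : ∀ i ∈ s, (x i / w i ^ (1 / p)) ^ p = x i ^ p / w i := by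
    intro i hi
    rw [div_rpow (hx i hi) (rpow_nonneg (hw i hi).le _), ← rpow_mul (hw i hi).le,
      one_div_mul_cancel hp0.ne', rpow_one]
  have hg : ∀ i ∈ s,
      (b i * w i ^ (1 / p)) ^ (p / (p - 1)) = b i ^ (p / (p - 1)) * w i ^ (1 / (p - 1)) := by
    intro i hi
    rw [mul_rpow (hb i hi) (rpow_nonneg (hw i hi).le _), ← rpow_mul (hw i hi).le]
    congr 2
    field_simp
  have hholder := inner_le_Lp_mul_Lq_of_nonneg s (.conjExponent hp)
    (f := fun i => x i / w i ^ (1 / p)) (g := fun i => b i * w i ^ (1 / p))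
    (fun i hi => div_nonneg (hx i hi) (rpow_nonneg (hw i hi).le _))
    (fun i hi => mul_nonneg (hb i hi) (rpow_nonneg (hw i hi).le _))
  rw [conjExponent, sum_congr rfl hf, sum_congr rfl hg] at hholder
  rw [sum_congr rfl hsplit]
  have hT : 0 ≤ ∑ i ∈ s, x i ^ p / w i :=
    sum_nonneg fun i hi => div_nonneg (rpow_nonneg (hx i hi) p) (hw i hi).le
  have hS : 0 ≤ ∑ i ∈ s, b i ^ (p / (p - 1)) * w i ^ (1 / (p - 1)) :=
    sum_nonneg fun i hi => mul_nonneg (rpow_nonneg (hb i hi) _) (rpow_nonneg (hw i hi).le _)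
  calc (∑ i ∈ s, x i / w i ^ (1 / p) * (b i * w i ^ (1 / p))) ^ p
      ≤ ((∑ i ∈ s, x i ^ p / w i) ^ (1 / p) *
          (∑ i ∈ s, b i ^ (p / (p - 1)) * w i ^ (1 / (p - 1))) ^ (1 / (p / (p - 1)))) ^ p :=
        rpow_le_rpow
          (sum_nonneg fun i hi => by rw [← hsplit i hi]; exact mul_nonneg (hb i hi) (hx i hi))
          hholder hp0.le
    _ = _ := by
        rw [mul_rpow (rpow_nonneg hT _) (rpow_nonneg hS _), ← rpow_mul hT, ← rpow_mul hS,
          one_div_mul_cancel hp0.ne', rpow_one]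
        congr 2
        field_simp

theorem sum_range_sub_mul_sum_div_add_eq {P y : ℕ → ℝ} (hP : ∀ n, P n ≠ 0) (N : ℕ) :
    ∑ n ∈ range N, (P n - P (n + 1)) * ∑ k ∈ range (n + 1), y k / P k +
      P N * ∑ k ∈ range N, y k / P k = ∑ n ∈ range N, y n := by
  induction N with
  | zero => simp
  | succ N ih =>
    rw [sum_range_succ, sum_range_succ (fun k => y k / P k), sum_range_succ y, ← ih]
    field_simp [hP N]
    ring

theorem sum_range_sub_mul_sum_div_le {P y : ℕ → ℝ} (hP : ∀ n, 0 < P n) (hy : ∀ n, 0 ≤ y n)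
    (N : ℕ) :
    ∑ n ∈ range N, (P n - P (n + 1)) * ∑ k ∈ range (n + 1), y k / P k ≤ ∑ n ∈ range N, y n := by
  have htail : 0 ≤ P N * ∑ k ∈ range N, y k / P k :=
    mul_nonneg (hP N).le (sum_nonneg fun k _ => div_nonneg (hy k) (hP k).le)
  linarith [sum_range_sub_mul_sum_div_add_eq (y := y) (fun n => (hP n).ne') N]

theorem sum_range_rpow_le_of_schur {p c : ℝ} (hp : 1 < p) (hc : 0 ≤ c) {a b x P : ℕ → ℝ}
    (ha : ∀ n, 0 < a n) (hb : ∀ n, 0 ≤ b n) (hx : ∀ n, 0 ≤ x n) (hP : ∀ n, 0 < P n)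
    (hschur : ∀ n, (∑ k ∈ range (n + 1), b k ^ (p / (p - 1)) * P k ^ (1 / (p - 1))) ^ (p - 1)
      ≤ c * (a n ^ p * (P n - P (n + 1))))
    (N : ℕ) :
    ∑ n ∈ range N, (1 / a n * ∑ k ∈ range (n + 1), b k * x k) ^ p ≤
      c * ∑ n ∈ range N, x n ^ p := by
  have hrow : ∀ n, (1 / a n * ∑ k ∈ range (n + 1), b k * x k) ^ p
      ≤ c * ((P n - P (n + 1)) * ∑ k ∈ range (n + 1), x k ^ p / P k) := by
    intro n
    have hT : 0 ≤ ∑ k ∈ range (n + 1), x k ^ p / P k :=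
      sum_nonneg fun k _ => div_nonneg (rpow_nonneg (hx k) p) (hP k).le
    have hap : 0 < a n ^ p := rpow_pos_of_pos (ha n) p
    rw [mul_rpow (one_div_nonneg.mpr (ha n).le) (sum_nonneg fun k _ => mul_nonneg (hb k) (hx k)),
      div_rpow zero_le_one (ha n).le, one_rpow]
    calc 1 / a n ^ p * (∑ k ∈ range (n + 1), b k * x k) ^ p
        ≤ 1 / a n ^ p * ((∑ k ∈ range (n + 1), x k ^ p / P k) *
            (∑ k ∈ range (n + 1), b k ^ (p / (p - 1)) * P k ^ (1 / (p - 1))) ^ (p - 1)) := by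
          gcongr
          exact rpow_sum_mul_le_weighted _ hp (fun k _ => hb k) (fun k _ => hx k) (fun k _ => hP k)
      _ ≤ 1 / a n ^ p * ((∑ k ∈ range (n + 1), x k ^ p / P k) *
            (c * (a n ^ p * (P n - P (n + 1))))) := by
          gcongr
          exact hschur n
      _ = _ := by
          field_simp
  calc ∑ n ∈ range N, (1 / a n * ∑ k ∈ range (n + 1), b k * x k) ^ p
      ≤ ∑ n ∈ range N, c * ((P n - P (n + 1)) * ∑ k ∈ range (n + 1), x k ^ p / P k) :=
        sum_le_sum fun n _ => hrow n
    _ ≤ c * ∑ n ∈ range N, x n ^ p := by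
        rw [← mul_sum]
        exact mul_le_mul_of_nonneg_left
          (sum_range_sub_mul_sum_div_le hP (fun n => rpow_nonneg (hx n) p) N) hc

theorem Finset.sum_Icc_one_eq_sum_range {M : Type*} [AddCommMonoid M] (f : ℕ → M) (n : ℕ) :
    ∑ k ∈ Icc 1 n, f k = ∑ k ∈ range n, f (k + 1) := by
  rw [range_eq_Ico, sum_Ico_add', zero_add, Ico_add_one_right_eq_Icc]

theorem div_sub_rpow_eq_inv_one_sub_div_rpow {p L : ℝ} (hp0 : 0 < p) (hLp : L ≤ p) :
    (p / (p - L)) ^ p = ((1 - L / p) ^ p)⁻¹ := by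
  rw [← inv_rpow (by rw [sub_nonneg, div_le_one hp0]; exact hLp)]
  congr 1
  field_simp

theorem ENNReal.tsum_ofReal_le_of_sum_range_le {f g : ℕ → ℝ} {c : ℝ} (hf : ∀ n, 0 ≤ f n)
    (hg : ∀ n, 0 ≤ g n) (h : ∀ N, ∑ n ∈ range N, f n ≤ c * ∑ n ∈ range N, g n) :
    ∑' n, ENNReal.ofReal (f n) ≤ ENNReal.ofReal c * ∑' n, ENNReal.ofReal (g n) := by
  rw [ENNReal.tsum_eq_iSup_nat]
  refine iSup_le fun N => ?_
  calc ∑ n ∈ range N, ENNReal.ofReal (f n)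
      = ENNReal.ofReal (∑ n ∈ range N, f n) := (ENNReal.ofReal_sum_of_nonneg fun n _ => hf n).symm
    _ ≤ ENNReal.ofReal (c * ∑ n ∈ range N, g n) := ENNReal.ofReal_le_ofReal (h N)
    _ = ENNReal.ofReal c * ∑ n ∈ range N, ENNReal.ofReal (g n) := by
        rw [ENNReal.ofReal_mul' (sum_nonneg fun n _ => hg n),
          ENNReal.ofReal_sum_of_nonneg fun n _ => hg n]
    _ ≤ ENNReal.ofReal c * ∑' n, ENNReal.ofReal (g n) := by
        gcongr
        exact ENNReal.sum_le_tsum _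

theorem rpow_div_sub_one_rpow_sub_one {p s u : ℝ} (hp : p ≠ 1) (hu : 0 ≤ u) :
    (u ^ (s / (p - 1))) ^ (p - 1) = u ^ s := by
  rw [← rpow_mul hu, div_mul_cancel₀ _ (sub_ne_zero.mpr hp)]

theorem one_lt_of_lt_rpow {μ t p : ℝ} (hμ0 : 0 < μ) (hμ1 : μ ≤ 1) (ht : 0 < t) (hp : 1 ≤ p)
    (h : μ * t + 1 - μ < t ^ p) : 1 < μ * t + 1 - μ := by
  have ht1 : 1 < t := by
    by_contra! ht1
    have : t ^ p ≤ t := by simpa using rpow_le_rpow_of_exponent_ge ht ht1 hp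
    nlinarith
  nlinarith

namespace Factorable

noncomputable def lam (μ : ℝ) (a b : ℕ → ℝ) (n : ℕ) : ℝ :=
  μ * (a n / b n) + 1 - μ

noncomputable def weight (μ lp : ℝ) (a b : ℕ → ℝ) (n : ℕ) : ℝ :=
  ∏ m ∈ range n, (1 - lp / lam μ a b m)

def Cond (p μ lp : ℝ) (a b : ℕ → ℝ) (n : ℕ) : Prop :=
  lam μ a b (n + 1) ^ (1 / (p - 1)) *
      ((lam μ a b n - lp) ^ (1 / (p - 1)) + (a n / b (n + 1)) ^ (p / (p - 1)))
    ≤ (a (n + 1) / b (n + 1)) ^ (p / (p - 1)) * (lam μ a b n - lp) ^ (1 / (p - 1))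

variable {p μ lp : ℝ} {a b : ℕ → ℝ}

theorem lam_zero (hab : a 0 = b 0) (hb : b 0 ≠ 0) : lam μ a b 0 = 1 := by
  rw [lam, hab, div_self hb]
  ring

theorem lam_pos (hμ0 : 0 < μ) (hμ1 : μ ≤ 1) (ha : ∀ n, 0 < a n) (hb : ∀ n, 0 < b n) (n : ℕ) :
    0 < lam μ a b n := by
  have := div_pos (ha n) (hb n)
  rw [lam]
  nlinarith

theorem weight_succ (n : ℕ) :
    weight μ lp a b (n + 1) = weight μ lp a b n * (1 - lp / lam μ a b n) :=
  prod_range_succ _ _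

theorem weight_div_lam {n : ℕ} (hlam : lam μ a b n ≠ 0) (hlp : lam μ a b n - lp ≠ 0) :
    weight μ lp a b n / lam μ a b n = weight μ lp a b (n + 1) / (lam μ a b n - lp) := by
  rw [weight_succ]
  field_simp

theorem weight_sub_weight_succ (n : ℕ) :
    weight μ lp a b n - weight μ lp a b (n + 1) = lp * (weight μ lp a b n / lam μ a b n) := by
  rw [weight_succ]
  ring

theorem Cond.rescale (hμ0 : 0 < μ) (hμ1 : μ ≤ 1) (ha : ∀ n, 0 < a n)
    (hb : ∀ n, 0 < b n) {n : ℕ} (hlam : lp < lam μ a b n) (hcond : Cond p μ lp a b n) :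
    b (n + 1) ^ (p / (p - 1)) + a n ^ (p / (p - 1)) / (lam μ a b n - lp) ^ (1 / (p - 1))
      ≤ a (n + 1) ^ (p / (p - 1)) / lam μ a b (n + 1) ^ (1 / (p - 1)) := by
  have hA := rpow_pos_of_pos (lam_pos hμ0 hμ1 ha hb (n + 1)) (1 / (p - 1))
  have hB := rpow_pos_of_pos (sub_pos.mpr hlam) (1 / (p - 1))
  have hβ := rpow_pos_of_pos (hb (n + 1)) (p / (p - 1))
  unfold Cond at hcond
  rw [div_rpow (ha n).le (hb (n + 1)).le, div_rpow (ha (n + 1)).le (hb (n + 1)).le] at hcond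
  generalize lam μ a b (n + 1) ^ (1 / (p - 1)) = A at hA hcond ⊢
  generalize (lam μ a b n - lp) ^ (1 / (p - 1)) = B at hB hcond ⊢
  generalize b (n + 1) ^ (p / (p - 1)) = β at hβ hcond ⊢
  rw [le_div_iff₀ hA]
  calc (β + a n ^ (p / (p - 1)) / B) * A
      = A * (B + a n ^ (p / (p - 1)) / β) * (β / B) := by field_simp
    _ ≤ a (n + 1) ^ (p / (p - 1)) / β * B * (β / B) :=
        mul_le_mul_of_nonneg_right hcond (div_pos hβ hB).le
    _ = a (n + 1) ^ (p / (p - 1)) := by field_simp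

theorem lp_lt_lam (hp : 1 < p) (hμ0 : 0 < μ) (hμ1 : μ ≤ 1) (hlp : lp < 1) (ha : ∀ n, 0 < a n)
    (hb : ∀ n, 0 < b n) (hab : a 0 = b 0) (hcond : ∀ n, Cond p μ lp a b n) (n : ℕ) :
    lp < lam μ a b n := by
  induction n with
  | zero => rwa [lam_zero hab (hb 0).ne']
  | succ n ih =>
    have hstep := (hcond n).rescale hμ0 hμ1 ha hb ih
    have hpos : 0 < a n ^ (p / (p - 1)) / (lam μ a b n - lp) ^ (1 / (p - 1)) :=
      div_pos (rpow_pos_of_pos (ha n) _) (rpow_pos_of_pos (sub_pos.mpr ih) _)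
    have hlt : lam μ a b (n + 1) < (a (n + 1) / b (n + 1)) ^ p := by
      have hA := rpow_pos_of_pos (lam_pos hμ0 hμ1 ha hb (n + 1)) (1 / (p - 1))
      have hpow : lam μ a b (n + 1) ^ (1 / (p - 1)) < (a (n + 1) / b (n + 1)) ^ (p / (p - 1)) := by
        rw [div_rpow (ha _).le (hb _).le, lt_div_iff₀ (rpow_pos_of_pos (hb _) _), mul_comm,
          ← lt_div_iff₀ hA]
        linarith
      have := rpow_lt_rpow (rpow_nonneg (lam_pos hμ0 hμ1 ha hb _).le _) hpow
        (by linarith : 0 < p - 1)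
      rwa [rpow_div_sub_one_rpow_sub_one hp.ne' (lam_pos hμ0 hμ1 ha hb _).le,
        rpow_div_sub_one_rpow_sub_one hp.ne' (div_pos (ha _) (hb _)).le, rpow_one] at this
    exact hlp.trans (one_lt_of_lt_rpow hμ0 hμ1 (div_pos (ha _) (hb _)) hp.le hlt)

theorem weight_pos (hlp0 : 0 < lp) (hlam : ∀ n, lp < lam μ a b n) (n : ℕ) :
    0 < weight μ lp a b n :=
  prod_pos fun m _ => sub_pos.mpr <| (div_lt_one (hlp0.trans (hlam m))).mpr (hlam m)

theorem sum_rpow_weight_le (hp : 1 < p) (hμ0 : 0 < μ) (hμ1 : μ ≤ 1) (hlp0 : 0 < lp)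
    (hlp1 : lp < 1) (ha : ∀ n, 0 < a n) (hb : ∀ n, 0 < b n) (hab : a 0 = b 0)
    (hcond : ∀ n, Cond p μ lp a b n) (n : ℕ) :
    ∑ k ∈ range (n + 1), b k ^ (p / (p - 1)) * weight μ lp a b k ^ (1 / (p - 1))
      ≤ a n ^ (p / (p - 1)) * (weight μ lp a b n / lam μ a b n) ^ (1 / (p - 1)) := by
  have hlam := lp_lt_lam hp hμ0 hμ1 hlp1 ha hb hab hcond
  have hP := weight_pos hlp0 hlam
  induction n with
  | zero =>
    rw [sum_range_one, lam_zero hab (hb 0).ne', div_one, hab]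
  | succ n ih =>
    have hlam_pos := lam_pos hμ0 hμ1 ha hb
    have hPq := rpow_pos_of_pos (hP (n + 1)) (1 / (p - 1))
    have hstep := (hcond n).rescale hμ0 hμ1 ha hb (hlam n)
    rw [sum_range_succ]
    calc ∑ k ∈ range (n + 1), b k ^ (p / (p - 1)) * weight μ lp a b k ^ (1 / (p - 1))
          + b (n + 1) ^ (p / (p - 1)) * weight μ lp a b (n + 1) ^ (1 / (p - 1))
        ≤ a n ^ (p / (p - 1)) * (weight μ lp a b n / lam μ a b n) ^ (1 / (p - 1))
          + b (n + 1) ^ (p / (p - 1)) * weight μ lp a b (n + 1) ^ (1 / (p - 1)) := by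
          gcongr
      _ = (b (n + 1) ^ (p / (p - 1)) + a n ^ (p / (p - 1)) / (lam μ a b n - lp) ^ (1 / (p - 1)))
            * weight μ lp a b (n + 1) ^ (1 / (p - 1)) := by
          rw [weight_div_lam (hlam_pos n).ne' (sub_pos.mpr (hlam n)).ne',
            div_rpow (hP _).le (sub_pos.mpr (hlam n)).le]
          ring
      _ ≤ a (n + 1) ^ (p / (p - 1)) / lam μ a b (n + 1) ^ (1 / (p - 1))
            * weight μ lp a b (n + 1) ^ (1 / (p - 1)) := by
          gcongr
      _ = a (n + 1) ^ (p / (p - 1)) *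
            (weight μ lp a b (n + 1) / lam μ a b (n + 1)) ^ (1 / (p - 1)) := by
          rw [div_rpow (hP _).le (hlam_pos _).le]
          ring

theorem rpow_sum_rpow_weight_le (hp : 1 < p) (hμ0 : 0 < μ) (hμ1 : μ ≤ 1) (hlp0 : 0 < lp)
    (hlp1 : lp < 1) (ha : ∀ n, 0 < a n) (hb : ∀ n, 0 < b n) (hab : a 0 = b 0)
    (hcond : ∀ n, Cond p μ lp a b n) (n : ℕ) :
    (∑ k ∈ range (n + 1), b k ^ (p / (p - 1)) * weight μ lp a b k ^ (1 / (p - 1))) ^ (p - 1)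
      ≤ 1 / lp * (a n ^ p * (weight μ lp a b n - weight μ lp a b (n + 1))) := by
  have hPΛ : 0 ≤ weight μ lp a b n / lam μ a b n :=
    div_nonneg (weight_pos hlp0 (lp_lt_lam hp hμ0 hμ1 hlp1 ha hb hab hcond) n).le
      (lam_pos hμ0 hμ1 ha hb n).le
  calc (∑ k ∈ range (n + 1), b k ^ (p / (p - 1)) * weight μ lp a b k ^ (1 / (p - 1))) ^ (p - 1)
      ≤ (a n ^ (p / (p - 1)) * (weight μ lp a b n / lam μ a b n) ^ (1 / (p - 1))) ^ (p - 1) :=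
        rpow_le_rpow (sum_nonneg fun k _ => mul_nonneg (rpow_nonneg (hb k).le _)
            (rpow_nonneg (weight_pos hlp0 (lp_lt_lam hp hμ0 hμ1 hlp1 ha hb hab hcond) k).le _))
          (sum_rpow_weight_le hp hμ0 hμ1 hlp0 hlp1 ha hb hab hcond n) (by linarith)
    _ = a n ^ p * (weight μ lp a b n / lam μ a b n) := by
        rw [mul_rpow (rpow_nonneg (ha n).le _) (rpow_nonneg hPΛ _),
          rpow_div_sub_one_rpow_sub_one hp.ne' (ha n).le,
          rpow_div_sub_one_rpow_sub_one hp.ne' hPΛ, rpow_one]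
    _ = 1 / lp * (a n ^ p * (weight μ lp a b n - weight μ lp a b (n + 1))) := by
        rw [weight_sub_weight_succ]
        field_simp

end Factorable

theorem stmt_0_general (p L lp : ℝ) (hp : 1 < p) (hL0 : 0 < L) (hLp : L < p)
    (hlp : lp = (1 - L / p) ^ p)
    (a b : ℕ → ℝ) (ha : ∀ n, 1 ≤ n → 0 < a n) (hb : ∀ n, 1 ≤ n → 0 < b n)
    (hab : a 1 = b 1)
    (hcond : ∀ n, 1 ≤ n →
      (lp ^ (1 - 1 / p) * (a (n + 1) / b (n + 1)) + 1 - lp ^ (1 - 1 / p)) ^ (1 / (p - 1)) *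
        ((lp ^ (1 - 1 / p) * (a n / b n) + 1 - lp - lp ^ (1 - 1 / p)) ^ (1 / (p - 1)) +
          (a n / b (n + 1)) ^ (p / (p - 1)))
      ≤ (a (n + 1) / b (n + 1)) ^ (p / (p - 1)) *
          (lp ^ (1 - 1 / p) * (a n / b n) + 1 - lp - lp ^ (1 - 1 / p)) ^ (1 / (p - 1)))
    (x : ℕ → ℝ) (hx : ∀ n, 1 ≤ n → 0 ≤ x n) :
    ∑' n : ℕ, ENNReal.ofReal (((1 / a (n + 1)) * ∑ k ∈ Finset.Icc 1 (n + 1), b k * x k) ^ p)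
      ≤ ENNReal.ofReal ((p / (p - L)) ^ p) * ∑' n : ℕ, ENNReal.ofReal (x (n + 1) ^ p) := by
  have hp0 : 0 < p := by linarith
  have hbase : 0 < 1 - L / p := by rw [sub_pos, div_lt_one hp0]; exact hLp
  have hlp0 : 0 < lp := hlp ▸ rpow_pos_of_pos hbase p
  have hlp1 : lp < 1 := hlp ▸ rpow_lt_one hbase.le (by linarith [div_pos hL0 hp0]) hp0
  set μ := lp ^ (1 - 1 / p)
  have hμ0 : 0 < μ := rpow_pos_of_pos hlp0 _
  have hμ1 : μ ≤ 1 := rpow_le_one hlp0.le hlp1.le (by rw [sub_nonneg, div_le_one hp0]; exact hp.le)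
  have ha' : ∀ n, 0 < a (n + 1) := fun n => ha _ n.succ_pos
  have hb' : ∀ n, 0 < b (n + 1) := fun n => hb _ n.succ_pos
  have hcond' : ∀ n, Factorable.Cond p μ lp (fun n => a (n + 1)) (fun n => b (n + 1)) n := by
    intro n
    have h := hcond (n + 1) n.succ_pos
    simp only [show ∀ t, μ * t + 1 - lp - μ = μ * t + 1 - μ - lp from fun t => by ring] at h
    exact h
  rw [div_sub_rpow_eq_inv_one_sub_div_rpow hp0 hLp.le, ← hlp, ← one_div]
  refine ENNReal.tsum_ofReal_le_of_sum_range_le (fun n => ?_)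
    (fun n => rpow_nonneg (hx _ n.succ_pos) p) fun N => ?_
  · exact rpow_nonneg (mul_nonneg (one_div_nonneg.mpr (ha' n).le)
      (sum_nonneg fun k hk => mul_nonneg (hb k (mem_Icc.mp hk).1).le (hx k (mem_Icc.mp hk).1))) p
  · simp only [sum_Icc_one_eq_sum_range]
    exact sum_range_rpow_le_of_schur hp (one_div_nonneg.mpr hlp0.le) ha' (fun n => (hb' n).le)
      (fun n => hx _ n.succ_pos)
      (Factorable.weight_pos hlp0 (Factorable.lp_lt_lam hp hμ0 hμ1 hlp1 ha' hb' hab hcond'))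
      (Factorable.rpow_sum_rpow_weight_le hp hμ0 hμ1 hlp0 hlp1 ha' hb' hab hcond') N

/-- Theorem (mainthm) on l^p norms of factorable matrices. -/
theorem stmt_0 (p L lp : ℝ) (hp : 1 < p) (hL0 : 0 < L) (hLp : L < p)
    (hlp : lp = (1 - L / p) ^ p)
    (a b : ℕ → ℝ) (ha : ∀ n, 1 ≤ n → 0 < a n) (hb : ∀ n, 1 ≤ n → 0 < b n)
    (hab : a 1 = b 1)
    (hcond : ∀ n, 1 ≤ n →
      (lp ^ (1 - 1 / p) * (a (n + 1) / b (n + 1)) + 1 - lp ^ (1 - 1 / p)) ^ (1 / (p - 1)) *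
        ((lp ^ (1 - 1 / p) * (a n / b n) + 1 - lp - lp ^ (1 - 1 / p)) ^ (1 / (p - 1)) +
          (a n / b (n + 1)) ^ (p / (p - 1)))
      ≤ (a (n + 1) / b (n + 1)) ^ (p / (p - 1)) *
          (lp ^ (1 - 1 / p) * (a n / b n) + 1 - lp - lp ^ (1 - 1 / p)) ^ (1 / (p - 1)))
    (x : ℕ → ℝ) (hx : ∀ n, 1 ≤ n → 0 ≤ x n)
    (hxsum : Summable fun n : ℕ => x (n + 1) ^ p) :
    ∑' n : ℕ, ENNReal.ofReal (((1 / a (n + 1)) * ∑ k ∈ Finset.Icc 1 (n + 1), b k * x k) ^ p)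
      ≤ ENNReal.ofReal ((p / (p - L)) ^ p) * ∑' n : ℕ, ENNReal.ofReal (x (n + 1) ^ p) :=
  stmt_0_general p L lp hp hL0 hLp hlp a b ha hb hab hcond x hx
end

section
/- Let (λ_n)_{n≥1} be a positive real sequence with partial sums Λ_n = Σ_{k=1}^n λ_k, and let 0<L<2. Suppose that for every integer n≥1 one has Λ_{n+1}/λ_{n+1} − Λ_n/λ_n ≤ L + (L^2/4)·((1+L/2)/(1−L/2))·1/(Λ_{n+1}/λ_{n+1} + L/2). Then for every nonnegative real sequence (x_n)_{n≥1} with Σ_{n=1}^∞ x_n^2 < ∞, one has Σ_{n=1}^∞ ( (1/Λ_n) Σ_{k=1}^n λ_k x_k )^2 ≤ (2/(2−L))^2 Σ_{n=1}^∞ x_n^2. -/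
/-!
Write `y n` for the weighted mean, `m = 2 - L` and `a n = Λ n / λ n ≥ 1`. Since
`y (n+1) = (1 - 1/b) y n + (1/b) x (n+1)` with `b = a (n+1)`, a two-term Cauchy–Schwarz
inequality gives the one-step energy estimate
`m² y (n+1)² + D (a (n+1)) y (n+1)² ≤ D (a n) y n² + 4 x (n+1)²`,
where `D a = 2m (a - 1) + L (4 - L)`; the hypothesis on `a (n+1) - a n` is precisely the
condition that the Cauchy–Schwarz constant is at most one. Telescoping and discarding the
nonnegative last energy term leaves `m² ∑ y n² ≤ 4 ∑ x n²`.
-/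

open Finset

theorem mul_sq_add_le_of_mul_le {P Q R α β : ℝ} (hP : 0 < P) (hQ : 0 < Q) (hR : 0 ≤ R)
    (h : R * (α ^ 2 * Q + β ^ 2 * P) ≤ P * Q) (s t : ℝ) :
    R * (α * s + β * t) ^ 2 ≤ P * s ^ 2 + Q * t ^ 2 := by
  have cauchy_schwarz :
      P * Q * (α * s + β * t) ^ 2 ≤ (α ^ 2 * Q + β ^ 2 * P) * (P * s ^ 2 + Q * t ^ 2) := by
    nlinarith [sq_nonneg (α * Q * t - β * P * s)]
  refine le_of_mul_le_mul_left ?_ (mul_pos hP hQ)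
  calc P * Q * (R * (α * s + β * t) ^ 2) = R * (P * Q * (α * s + β * t) ^ 2) := by ring
    _ ≤ R * ((α ^ 2 * Q + β ^ 2 * P) * (P * s ^ 2 + Q * t ^ 2)) := by gcongr
    _ = R * (α ^ 2 * Q + β ^ 2 * P) * (P * s ^ 2 + Q * t ^ 2) := by ring
    _ ≤ P * Q * (P * s ^ 2 + Q * t ^ 2) := by gcongr

theorem sum_range_add_le_add_sum_range {u v V : ℕ → ℝ} (h : ∀ n, u n + V (n + 1) ≤ V n + v n)
    (N : ℕ) : ∑ n ∈ range N, u n + V N ≤ V 0 + ∑ n ∈ range N, v n := by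
  induction N with
  | zero => simp
  | succ N ih => rw [sum_range_succ, sum_range_succ]; linarith [h N]

theorem tsum_ofReal_le_mul_tsum_ofReal {f g : ℕ → ℝ} {c : ℝ} (hf : ∀ n, 0 ≤ f n)
    (hg : ∀ n, 0 ≤ g n) (hc : 0 ≤ c) (h : ∀ N, ∑ n ∈ range N, f n ≤ c * ∑ n ∈ range N, g n) :
    ∑' n, ENNReal.ofReal (f n) ≤ ENNReal.ofReal c * ∑' n, ENNReal.ofReal (g n) := by
  refine ENNReal.tsum_le_of_sum_range_le fun N => ?_
  calc ∑ n ∈ range N, ENNReal.ofReal (f n) = ENNReal.ofReal (∑ n ∈ range N, f n) :=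
        (ENNReal.ofReal_sum_of_nonneg fun n _ => hf n).symm
    _ ≤ ENNReal.ofReal (c * ∑ n ∈ range N, g n) := ENNReal.ofReal_le_ofReal (h N)
    _ = ENNReal.ofReal c * ∑ n ∈ range N, ENNReal.ofReal (g n) := by
        rw [ENNReal.ofReal_mul hc, ENNReal.ofReal_sum_of_nonneg fun n _ => hg n]
    _ ≤ ENNReal.ofReal c * ∑' n, ENNReal.ofReal (g n) := by
        gcongr
        exact ENNReal.sum_le_tsum _

def IncrementBound (L a b : ℝ) : Prop :=
  b - a ≤ L + L ^ 2 / 4 * ((1 + L / 2) / (1 - L / 2)) * (1 / (b + L / 2))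

def lyapunovCoeff (L a : ℝ) : ℝ := 2 * (2 - L) * (a - 1) + L * (4 - L)

section lyapunovCoeff

variable {L a b : ℝ}

theorem incrementBound_iff (hL0 : 0 < L) (hL2 : L < 2) (hb : 1 ≤ b) :
    IncrementBound L a b ↔ 2 * (2 - L) * (b + L / 2) * (b - a - L) ≤ L ^ 2 * (2 + L) / 2 := by
  have hbL : 0 < b + L / 2 := by linarith
  have hm : 0 < 2 - L := by linarith
  have hc : L ^ 2 / 4 * ((1 + L / 2) / (1 - L / 2)) * (1 / (b + L / 2)) =
      L ^ 2 * (2 + L) / 2 / (2 * (2 - L) * (b + L / 2)) := by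
    field_simp
    ring
  rw [IncrementBound, hc, ← sub_le_iff_le_add', le_div_iff₀ (by positivity), mul_comm]

theorem lyapunovCoeff_pos (hL0 : 0 < L) (hL2 : L < 2) (ha : 1 ≤ a) : 0 < lyapunovCoeff L a := by
  unfold lyapunovCoeff
  nlinarith [mul_nonneg (sub_nonneg.2 hL2.le) (sub_nonneg.2 ha),
    mul_pos hL0 (by linarith : 0 < 4 - L)]

theorem lyapunovCoeff_step (hL0 : 0 < L) (hL2 : L < 2) (ha : 1 ≤ a) (hb : 1 ≤ b)
    (hab : IncrementBound L a b) (s t : ℝ) :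
    ((2 - L) ^ 2 + lyapunovCoeff L b) * ((1 - b⁻¹) * s + b⁻¹ * t) ^ 2 ≤
      lyapunovCoeff L a * s ^ 2 + 4 * t ^ 2 := by
  have hDa := lyapunovCoeff_pos hL0 hL2 ha
  have hDb := lyapunovCoeff_pos hL0 hL2 hb
  refine mul_sq_add_le_of_mul_le hDa four_pos (by positivity) ?_ s t
  have hb0 : 0 < b := by linarith
  have hb1 : 0 ≤ b - 1 := by linarith
  have hslack := sub_nonneg.2 ((incrementBound_iff hL0 hL2 hb).1 hab)
  have hgap : lyapunovCoeff L a * 4 - ((2 - L) ^ 2 + lyapunovCoeff L b) *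
      ((1 - b⁻¹) ^ 2 * 4 + b⁻¹ ^ 2 * lyapunovCoeff L a) =
      4 * (b - 1) * (L ^ 2 * (2 + L) / 2 - 2 * (2 - L) * (b + L / 2) * (b - a - L)) / b ^ 2 := by
    unfold lyapunovCoeff
    field_simp
    ring
  rw [← sub_nonneg, hgap]
  positivity

end lyapunovCoeff

def partialSum (l : ℕ → ℝ) (n : ℕ) : ℝ := ∑ k ∈ Icc 1 n, l k

noncomputable def partialSumRatio (l : ℕ → ℝ) (n : ℕ) : ℝ := partialSum l n / l n

noncomputable def weightedMean (l x : ℕ → ℝ) (n : ℕ) : ℝ :=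
  1 / partialSum l n * ∑ k ∈ Icc 1 n, l k * x k

section weightedMean

variable {l : ℕ → ℝ} (x : ℕ → ℝ)

theorem partialSum_succ (n : ℕ) : partialSum l (n + 1) = partialSum l n + l (n + 1) :=
  sum_Icc_succ_top (by omega) l

theorem le_partialSum (hl : ∀ n, 1 ≤ n → 0 < l n) {n : ℕ} (hn : 1 ≤ n) : l n ≤ partialSum l n :=
  single_le_sum (fun k hk => (hl k (mem_Icc.1 hk).1).le) (mem_Icc.2 ⟨hn, le_rfl⟩)

theorem partialSum_pos (hl : ∀ n, 1 ≤ n → 0 < l n) {n : ℕ} (hn : 1 ≤ n) : 0 < partialSum l n :=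
  (hl n hn).trans_le (le_partialSum hl hn)

theorem one_le_partialSumRatio (hl : ∀ n, 1 ≤ n → 0 < l n) {n : ℕ} (hn : 1 ≤ n) :
    1 ≤ partialSumRatio l n :=
  (one_le_div (hl n hn)).2 (le_partialSum hl hn)

theorem partialSumRatio_one (hl : ∀ n, 1 ≤ n → 0 < l n) : partialSumRatio l 1 = 1 := by
  simp [partialSumRatio, partialSum, (hl 1 le_rfl).ne']

@[simp]
theorem weightedMean_zero : weightedMean l x 0 = 0 := by simp [weightedMean]

theorem partialSum_mul_weightedMean (hl : ∀ n, 1 ≤ n → 0 < l n) (n : ℕ) :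
    partialSum l n * weightedMean l x n = ∑ k ∈ Icc 1 n, l k * x k := by
  rcases Nat.eq_zero_or_pos n with rfl | hn
  · simp
  · rw [weightedMean, ← mul_assoc, mul_one_div_cancel (partialSum_pos hl hn).ne', one_mul]

theorem weightedMean_succ (hl : ∀ n, 1 ≤ n → 0 < l n) (n : ℕ) :
    weightedMean l x (n + 1) = (1 - (partialSumRatio l (n + 1))⁻¹) * weightedMean l x n +
      (partialSumRatio l (n + 1))⁻¹ * x (n + 1) := by
  have hΛ := partialSum_pos hl n.succ_pos
  have hrec : partialSum l (n + 1) * weightedMean l x (n + 1) =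
      partialSum l n * weightedMean l x n + l (n + 1) * x (n + 1) := by
    rw [partialSum_mul_weightedMean x hl, partialSum_mul_weightedMean x hl,
      sum_Icc_succ_top (by omega)]
  rw [partialSumRatio, inv_div, ← mul_right_inj' hΛ.ne', hrec,
    eq_sub_of_add_eq (partialSum_succ n).symm]
  field_simp

end weightedMean

section energy

variable {L : ℝ} {l : ℕ → ℝ} (x : ℕ → ℝ)

theorem lyapunovCoeff_mul_weightedMean_sq_nonneg (hL0 : 0 < L) (hL2 : L < 2)
    (hl : ∀ n, 1 ≤ n → 0 < l n) (n : ℕ) :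
    0 ≤ lyapunovCoeff L (partialSumRatio l n) * weightedMean l x n ^ 2 := by
  rcases Nat.eq_zero_or_pos n with rfl | hn
  · simp
  · exact mul_nonneg (lyapunovCoeff_pos hL0 hL2 (one_le_partialSumRatio hl hn)).le (sq_nonneg _)

theorem weightedMean_energy_step (hL0 : 0 < L) (hL2 : L < 2) (hl : ∀ n, 1 ≤ n → 0 < l n)
    (hcond : ∀ n, 1 ≤ n → IncrementBound L (partialSumRatio l n) (partialSumRatio l (n + 1)))
    (n : ℕ) :
    (2 - L) ^ 2 * weightedMean l x (n + 1) ^ 2 +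
        lyapunovCoeff L (partialSumRatio l (n + 1)) * weightedMean l x (n + 1) ^ 2 ≤
      lyapunovCoeff L (partialSumRatio l n) * weightedMean l x n ^ 2 + 4 * x (n + 1) ^ 2 := by
  rw [← add_mul, weightedMean_succ x hl]
  rcases Nat.eq_zero_or_pos n with rfl | hn
  · have hcoeff : (2 - L) ^ 2 + lyapunovCoeff L 1 = 4 := by unfold lyapunovCoeff; ring
    simp [partialSumRatio_one hl, hcoeff]
  · exact lyapunovCoeff_step hL0 hL2 (one_le_partialSumRatio hl hn)
      (one_le_partialSumRatio hl (by omega)) (hcond n hn) _ _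

theorem sum_range_weightedMean_sq_le (hL0 : 0 < L) (hL2 : L < 2) (hl : ∀ n, 1 ≤ n → 0 < l n)
    (hcond : ∀ n, 1 ≤ n → IncrementBound L (partialSumRatio l n) (partialSumRatio l (n + 1)))
    (N : ℕ) :
    ∑ n ∈ range N, weightedMean l x (n + 1) ^ 2 ≤
      (2 / (2 - L)) ^ 2 * ∑ n ∈ range N, x (n + 1) ^ 2 := by
  have energy := sum_range_add_le_add_sum_range
    (V := fun n => lyapunovCoeff L (partialSumRatio l n) * weightedMean l x n ^ 2)
    (weightedMean_energy_step x hL0 hL2 hl hcond) N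
  have hN := lyapunovCoeff_mul_weightedMean_sq_nonneg x hL0 hL2 hl N
  rw [← mul_sum, ← mul_sum] at energy
  simp only [weightedMean_zero] at energy
  rw [div_pow, div_mul_eq_mul_div, le_div_iff₀ (pow_pos (by linarith) 2)]
  linarith

end energy

theorem stmt_1_general (L : ℝ) (hL0 : 0 < L) (hL2 : L < 2)
    (l : ℕ → ℝ) (hl : ∀ n, 1 ≤ n → 0 < l n)
    (Λ : ℕ → ℝ) (hΛ : ∀ n, Λ n = ∑ k ∈ Finset.Icc 1 n, l k)
    (hcond : ∀ n, 1 ≤ n →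
      Λ (n + 1) / l (n + 1) - Λ n / l n
        ≤ L + (L ^ 2 / 4) * ((1 + L / 2) / (1 - L / 2)) *
            (1 / (Λ (n + 1) / l (n + 1) + L / 2)))
    (x : ℕ → ℝ) :
    ∑' n : ℕ, ENNReal.ofReal (((1 / Λ (n + 1)) * ∑ k ∈ Finset.Icc 1 (n + 1), l k * x k) ^ 2)
      ≤ ENNReal.ofReal ((2 / (2 - L)) ^ 2) * ∑' n : ℕ, ENNReal.ofReal (x (n + 1) ^ 2) := by
  obtain rfl : Λ = partialSum l := funext hΛ
  exact tsum_ofReal_le_mul_tsum_ofReal (fun _ => sq_nonneg _) (fun _ => sq_nonneg _) (sq_nonneg _)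
    (sum_range_weightedMean_sq_le x hL0 hL2 hl hcond)

/-- Corollary for l^2 norms of weighted mean matrices. -/
theorem stmt_1 (L : ℝ) (hL0 : 0 < L) (hL2 : L < 2)
    (l : ℕ → ℝ) (hl : ∀ n, 1 ≤ n → 0 < l n)
    (Λ : ℕ → ℝ) (hΛ : ∀ n, Λ n = ∑ k ∈ Finset.Icc 1 n, l k)
    (hcond : ∀ n, 1 ≤ n →
      Λ (n + 1) / l (n + 1) - Λ n / l n
        ≤ L + (L ^ 2 / 4) * ((1 + L / 2) / (1 - L / 2)) *
            (1 / (Λ (n + 1) / l (n + 1) + L / 2)))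
    (x : ℕ → ℝ) (hx : ∀ n, 1 ≤ n → 0 ≤ x n)
    (hxsum : Summable fun n : ℕ => x (n + 1) ^ 2) :
    ∑' n : ℕ, ENNReal.ofReal (((1 / Λ (n + 1)) * ∑ k ∈ Finset.Icc 1 (n + 1), l k * x k) ^ 2)
      ≤ ENNReal.ofReal ((2 / (2 - L)) ^ 2) * ∑' n : ℕ, ENNReal.ofReal (x (n + 1) ^ 2) :=
  stmt_1_general L hL0 hL2 l hl Λ hΛ hcond x
end

section
/- Let p>1 and 0<L<p. Let (a_n)_{n≥1} and (b_n)_{n≥1} be positive real sequences with a_1=b_1. Suppose that for every integer n≥1 one has Σ_{k=1}^n (b_k/a_n) · Π_{i=k}^n ( (a_i/b_{i+1} + 1 − L/p) / (a_i/b_i) )^{1/(p−1)} ≤ p/(p−L). Then for every nonnegative real sequence (x_n)_{n≥1} with Σ_{n=1}^∞ x_n^p < ∞, one has Σ_{n=1}^∞ ( (1/a_n) Σ_{k=1}^n b_k x_k )^p ≤ (p/(p−L))^p Σ_{n=1}^∞ x_n^p. -/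
/-!
Write `w i = hardyWeight p L a b i`, `C = p / (p - L)` and `D n k = ∏_{i=k}^n w i ^ (1/(p-1))`.
Hölder's inequality on row `n` with the weights `D n k`, together with the hypothesis
`∑_k (b k / a n) D n k ≤ C`, gives
`((1/a n) ∑_k b k x k)^p ≤ C^(p-1) ∑_k b k x k^p / (a n ∏_{i=k}^n w i)`.
After interchanging the sums, the column sums `∑_{n ≥ k} b k / (a n ∏_{i=k}^n w i)` telescope,
because `w` satisfies `1 / (a i w i) = C (1 / b i - 1 / (b (i+1) w i))`, so they are at most `C`.
-/

open Finset

noncomputable def hardyWeight (p L : ℝ) (a b : ℕ → ℝ) (i : ℕ) : ℝ :=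
  (a i / b (i + 1) + 1 - L / p) / (a i / b i)

theorem Real.rpow_one_div_sub_one_rpow_one_sub {t : ℝ} (ht : 0 ≤ t) {p : ℝ} (hp : p ≠ 1) :
    (t ^ (1 / (p - 1))) ^ (1 - p) = t⁻¹ := by
  have hp' : p - 1 ≠ 0 := sub_ne_zero.mpr hp
  rw [← Real.rpow_mul ht, show 1 / (p - 1) * (1 - p) = -1 by field_simp; ring, Real.rpow_neg_one]

theorem Real.rpow_inner_le_weight_mul_Lp {ι : Type*} (s : Finset ι) {p : ℝ} (hp : 1 ≤ p)
    {u d x : ι → ℝ} (hu : ∀ i ∈ s, 0 ≤ u i) (hd : ∀ i ∈ s, 0 < d i) (hx : ∀ i ∈ s, 0 ≤ x i) :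
    (∑ i ∈ s, u i * x i) ^ p
      ≤ (∑ i ∈ s, u i * d i) ^ (p - 1) * ∑ i ∈ s, u i * d i ^ (1 - p) * x i ^ p := by
  have hp0 : 0 < p := by linarith
  have holder := Real.inner_le_weight_mul_Lp_of_nonneg (univ : Finset s) hp
    (fun i => u i * d i) (fun i => x i / d i)
    (fun i => mul_nonneg (hu i i.2) (hd i i.2).le) (fun i => div_nonneg (hx i i.2) (hd i i.2).le)
  simp only [sum_coe_sort s (fun i => u i * d i * (x i / d i)),
    sum_coe_sort s (fun i => u i * d i),
    sum_coe_sort s (fun i => u i * d i * (x i / d i) ^ p)] at holder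
  have hux : ∑ i ∈ s, u i * d i * (x i / d i) = ∑ i ∈ s, u i * x i :=
    sum_congr rfl fun i hi => by field_simp [(hd i hi).ne']
  have hud : ∑ i ∈ s, u i * d i * (x i / d i) ^ p = ∑ i ∈ s, u i * d i ^ (1 - p) * x i ^ p :=
    sum_congr rfl fun i hi => by
      rw [Real.div_rpow (hx i hi) (hd i hi).le, Real.rpow_sub (hd i hi), Real.rpow_one]
      ring
  rw [hux, hud] at holder
  have hA : 0 ≤ ∑ i ∈ s, u i * d i := sum_nonneg fun i hi => mul_nonneg (hu i hi) (hd i hi).le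
  have hB : 0 ≤ ∑ i ∈ s, u i * d i ^ (1 - p) * x i ^ p := sum_nonneg fun i hi =>
    mul_nonneg (mul_nonneg (hu i hi) (Real.rpow_nonneg (hd i hi).le _))
      (Real.rpow_nonneg (hx i hi) _)
  calc (∑ i ∈ s, u i * x i) ^ p
      ≤ ((∑ i ∈ s, u i * d i) ^ (1 - p⁻¹) *
          (∑ i ∈ s, u i * d i ^ (1 - p) * x i ^ p) ^ p⁻¹) ^ p :=
        Real.rpow_le_rpow (sum_nonneg fun i hi => mul_nonneg (hu i hi) (hx i hi)) holder hp0.le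
    _ = _ := by
        rw [Real.mul_rpow (Real.rpow_nonneg hA _) (Real.rpow_nonneg hB _), ← Real.rpow_mul hA,
          ← Real.rpow_mul hB, inv_mul_cancel₀ hp0.ne', Real.rpow_one, sub_mul, one_mul,
          inv_mul_cancel₀ hp0.ne']

theorem sum_Icc_sum_Icc_le_of_sum_Icc_le {K : ℕ → ℕ → ℝ} {y : ℕ → ℝ} {C : ℝ} {N : ℕ}
    (hy : ∀ k ∈ Icc 1 N, 0 ≤ y k) (hK : ∀ k ∈ Icc 1 N, ∑ n ∈ Icc k N, K n k ≤ C) :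
    ∑ n ∈ Icc 1 N, ∑ k ∈ Icc 1 n, K n k * y k ≤ C * ∑ k ∈ Icc 1 N, y k := by
  have hswap : ∑ n ∈ Icc 1 N, ∑ k ∈ Icc 1 n, K n k * y k
      = ∑ k ∈ Icc 1 N, ∑ n ∈ Icc k N, K n k * y k :=
    sum_comm' fun n k => by simp only [mem_Icc]; omega
  rw [hswap, mul_sum]
  exact sum_le_sum fun k hk => by
    rw [← sum_mul]; exact mul_le_mul_of_nonneg_right (hK k hk) (hy k hk)

section Telescoping

variable {a b w : ℕ → ℝ} {C : ℝ} {k : ℕ}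

theorem sum_Icc_div_mul_prod_eq (hbk : b k ≠ 0)
    (hw : ∀ m, k ≤ m → 1 / (a m * w m) = C * (1 / b m - 1 / (b (m + 1) * w m)))
    {N : ℕ} (hN : k ≤ N) :
    ∑ n ∈ Icc k N, b k / (a n * ∏ i ∈ Icc k n, w i)
      = C * (1 - b k / (b (N + 1) * ∏ i ∈ Icc k N, w i)) := by
  induction N, hN using Nat.le_induction with
  | base =>
    simp only [Icc_self, sum_singleton, prod_singleton]
    rw [div_eq_mul_one_div (b k), hw k le_rfl]
    field_simp
  | succ N hN ih =>
    rw [sum_Icc_succ_top (by omega), ih, prod_Icc_succ_top (by omega)]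
    have h := hw (N + 1) (by omega)
    calc C * (1 - b k / (b (N + 1) * ∏ i ∈ Icc k N, w i))
          + b k / (a (N + 1) * ((∏ i ∈ Icc k N, w i) * w (N + 1)))
        = C * (1 - b k / (b (N + 1) * ∏ i ∈ Icc k N, w i))
          + b k / (∏ i ∈ Icc k N, w i) * (1 / (a (N + 1) * w (N + 1))) := by ring
      _ = _ := by rw [h]; ring

theorem sum_Icc_div_mul_prod_le (hC : 0 ≤ C) (hb : ∀ m, k ≤ m → 0 < b m)
    (hw0 : ∀ m, k ≤ m → 0 ≤ w m)
    (hw : ∀ m, k ≤ m → 1 / (a m * w m) = C * (1 / b m - 1 / (b (m + 1) * w m)))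
    {N : ℕ} (hN : k ≤ N) :
    ∑ n ∈ Icc k N, b k / (a n * ∏ i ∈ Icc k n, w i) ≤ C := by
  rw [sum_Icc_div_mul_prod_eq (hb k le_rfl).ne' hw hN]
  have hrest : 0 ≤ b k / (b (N + 1) * ∏ i ∈ Icc k N, w i) :=
    div_nonneg (hb k le_rfl).le <| mul_nonneg (hb _ (by omega)).le <|
      prod_nonneg fun i hi => hw0 i (mem_Icc.mp hi).1
  exact mul_le_of_le_one_right hC (by linarith)

end Telescoping

theorem ENNReal.tsum_ofReal_le_ofReal_mul_tsum {f g : ℕ → ℝ} {c : ℝ} (hc : 0 ≤ c)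
    (hf : ∀ n, 0 ≤ f n) (hg : ∀ n, 0 ≤ g n) (hgs : Summable g)
    (h : ∀ N, ∑ n ∈ range N, f n ≤ c * ∑ n ∈ range N, g n) :
    ∑' n, ENNReal.ofReal (f n) ≤ ENNReal.ofReal c * ∑' n, ENNReal.ofReal (g n) := by
  rw [← ENNReal.ofReal_tsum_of_nonneg hg hgs, ← ENNReal.ofReal_mul hc]
  refine ENNReal.tsum_le_of_sum_range_le fun N => ?_
  rw [← ENNReal.ofReal_sum_of_nonneg fun n _ => hf n]
  exact ENNReal.ofReal_le_ofReal <|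
    (h N).trans (mul_le_mul_of_nonneg_left (hgs.sum_le_tsum _ fun n _ => hg n) hc)

theorem sum_range_succ_eq_sum_Icc {M : Type*} [AddCommMonoid M] (f : ℕ → M) (N : ℕ) :
    ∑ n ∈ range N, f (n + 1) = ∑ n ∈ Icc 1 N, f n := by
  rw [range_eq_Ico, sum_Ico_add', zero_add, Ico_add_one_right_eq_Icc]

section Hardy

variable {p L : ℝ} {a b : ℕ → ℝ}

theorem hardyWeight_pos (hp : 0 < p) (hLp : L < p) {i : ℕ} (ha : 0 < a i) (hb : 0 < b i)
    (hb' : 0 < b (i + 1)) : 0 < hardyWeight p L a b i := by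
  have hLp' : L / p < 1 := (div_lt_one hp).mpr hLp
  exact div_pos (by linarith [div_pos ha hb']) (div_pos ha hb)

theorem one_div_mul_hardyWeight (hp : 0 < p) (hLp : L < p) {m : ℕ} (ha : 0 < a m)
    (hb : 0 < b m) (hb' : 0 < b (m + 1)) :
    1 / (a m * hardyWeight p L a b m)
      = p / (p - L) * (1 / b m - 1 / (b (m + 1) * hardyWeight p L a b m)) := by
  have hpL : p - L ≠ 0 := sub_ne_zero.mpr hLp.ne'
  have hden : a m * p + b (m + 1) * (p - L) ≠ 0 :=
    (add_pos (mul_pos ha hp) (mul_pos hb' (sub_pos.mpr hLp))).ne'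
  have hE : a m / b (m + 1) + 1 - L / p
      = (a m * p + b (m + 1) * (p - L)) / (b (m + 1) * p) := by
    field_simp
    ring
  unfold hardyWeight
  rw [hE]
  field_simp
  ring

theorem hardy_row_le (hp : 1 < p) (hLp : L < p) (ha : ∀ n, 1 ≤ n → 0 < a n)
    (hb : ∀ n, 1 ≤ n → 0 < b n) {x : ℕ → ℝ} (hx : ∀ n, 1 ≤ n → 0 ≤ x n) {C : ℝ} {n : ℕ}
    (hn : 1 ≤ n)
    (hcond : ∑ k ∈ Icc 1 n, (b k / a n) *
        ∏ i ∈ Icc k n, hardyWeight p L a b i ^ (1 / (p - 1)) ≤ C) :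
    ((1 / a n) * ∑ k ∈ Icc 1 n, b k * x k) ^ p
      ≤ C ^ (p - 1) *
          ∑ k ∈ Icc 1 n, b k / (a n * ∏ i ∈ Icc k n, hardyWeight p L a b i) * x k ^ p := by
  have hw : ∀ k ∈ Icc 1 n, ∀ i ∈ Icc k n, 0 < hardyWeight p L a b i := fun k hk i hi => by
    have hi1 : 1 ≤ i := (mem_Icc.mp hk).1.trans (mem_Icc.mp hi).1
    exact hardyWeight_pos (by linarith) hLp (ha i hi1) (hb i hi1) (hb _ (by omega))
  have hu : ∀ k ∈ Icc 1 n, 0 ≤ b k / a n := fun k hk =>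
    div_nonneg (hb k (mem_Icc.mp hk).1).le (ha n hn).le
  have hD : ∀ k ∈ Icc 1 n, 0 < ∏ i ∈ Icc k n, hardyWeight p L a b i ^ (1 / (p - 1)) :=
    fun k hk => prod_pos fun i hi => Real.rpow_pos_of_pos (hw k hk i hi) _
  have hDinv : ∀ k ∈ Icc 1 n, (∏ i ∈ Icc k n, hardyWeight p L a b i ^ (1 / (p - 1))) ^ (1 - p)
      = (∏ i ∈ Icc k n, hardyWeight p L a b i)⁻¹ := fun k hk => by
    rw [Real.finsetProd_rpow _ _ fun i hi => (hw k hk i hi).le,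
      Real.rpow_one_div_sub_one_rpow_one_sub (prod_nonneg fun i hi => (hw k hk i hi).le) hp.ne']
  have hSum : (1 / a n) * ∑ k ∈ Icc 1 n, b k * x k = ∑ k ∈ Icc 1 n, b k / a n * x k := by
    rw [mul_sum]; exact sum_congr rfl fun k _ => by ring
  rw [hSum]
  refine (Real.rpow_inner_le_weight_mul_Lp _ hp.le hu hD fun k hk =>
    hx k (mem_Icc.mp hk).1).trans ?_
  have hB : 0 ≤ ∑ k ∈ Icc 1 n, b k / a n *
      (∏ i ∈ Icc k n, hardyWeight p L a b i ^ (1 / (p - 1))) ^ (1 - p) * x k ^ p :=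
    sum_nonneg fun k hk => mul_nonneg (mul_nonneg (hu k hk) (Real.rpow_nonneg (hD k hk).le _))
      (Real.rpow_nonneg (hx k (mem_Icc.mp hk).1) _)
  have hA : 0 ≤ ∑ k ∈ Icc 1 n,
      b k / a n * ∏ i ∈ Icc k n, hardyWeight p L a b i ^ (1 / (p - 1)) :=
    sum_nonneg fun k hk => mul_nonneg (hu k hk) (hD k hk).le
  calc _ ≤ C ^ (p - 1) * ∑ k ∈ Icc 1 n, b k / a n *
        (∏ i ∈ Icc k n, hardyWeight p L a b i ^ (1 / (p - 1))) ^ (1 - p) * x k ^ p :=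
        mul_le_mul_of_nonneg_right (Real.rpow_le_rpow hA hcond (by linarith)) hB
    _ = _ := by
        congr 1
        exact sum_congr rfl fun k hk => by rw [hDinv k hk]; ring

theorem hardy_column_le (hp : 0 < p) (hLp : L < p) (ha : ∀ n, 1 ≤ n → 0 < a n)
    (hb : ∀ n, 1 ≤ n → 0 < b n) {k N : ℕ} (hk : 1 ≤ k) (hkN : k ≤ N) :
    ∑ n ∈ Icc k N, b k / (a n * ∏ i ∈ Icc k n, hardyWeight p L a b i) ≤ p / (p - L) :=
  sum_Icc_div_mul_prod_le (div_nonneg hp.le (sub_pos.mpr hLp).le)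
    (fun m hm => hb m (hk.trans hm))
    (fun m hm => (hardyWeight_pos hp hLp (ha m (hk.trans hm)) (hb m (hk.trans hm))
      (hb _ (by omega))).le)
    (fun m hm => one_div_mul_hardyWeight hp hLp (ha m (hk.trans hm)) (hb m (hk.trans hm))
      (hb _ (by omega)))
    hkN

end Hardy

theorem stmt_2_general (p L : ℝ) (hp : 1 < p) (hLp : L < p)
    (a b : ℕ → ℝ) (ha : ∀ n, 1 ≤ n → 0 < a n) (hb : ∀ n, 1 ≤ n → 0 < b n)
    (hcond : ∀ n, 1 ≤ n →
      ∑ k ∈ Finset.Icc 1 n, (b k / a n) *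
        ∏ i ∈ Finset.Icc k n, ((a i / b (i + 1) + 1 - L / p) / (a i / b i)) ^ (1 / (p - 1))
      ≤ p / (p - L))
    (x : ℕ → ℝ) (hx : ∀ n, 1 ≤ n → 0 ≤ x n)
    (hxsum : Summable fun n : ℕ => x (n + 1) ^ p) :
    ∑' n : ℕ, ENNReal.ofReal (((1 / a (n + 1)) * ∑ k ∈ Finset.Icc 1 (n + 1), b k * x k) ^ p)
      ≤ ENNReal.ofReal ((p / (p - L)) ^ p) * ∑' n : ℕ, ENNReal.ofReal (x (n + 1) ^ p) := by
  have hp0 : 0 < p := by linarith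
  have hC : 0 < p / (p - L) := div_pos hp0 (sub_pos.mpr hLp)
  refine ENNReal.tsum_ofReal_le_ofReal_mul_tsum (Real.rpow_nonneg hC.le _) (fun n => ?_)
    (fun n => Real.rpow_nonneg (hx _ (by omega)) _) hxsum fun N => ?_
  · exact Real.rpow_nonneg (mul_nonneg (one_div_pos.mpr (ha _ (by omega))).le <|
      sum_nonneg fun k hk => mul_nonneg (hb k (mem_Icc.mp hk).1).le (hx k (mem_Icc.mp hk).1)) _
  rw [sum_range_succ_eq_sum_Icc (fun n => ((1 / a n) * ∑ k ∈ Icc 1 n, b k * x k) ^ p),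
    sum_range_succ_eq_sum_Icc (fun n => x n ^ p)]
  calc ∑ n ∈ Icc 1 N, ((1 / a n) * ∑ k ∈ Icc 1 n, b k * x k) ^ p
      ≤ ∑ n ∈ Icc 1 N, (p / (p - L)) ^ (p - 1) *
          ∑ k ∈ Icc 1 n, b k / (a n * ∏ i ∈ Icc k n, hardyWeight p L a b i) * x k ^ p :=
        sum_le_sum fun n hn => hardy_row_le hp hLp ha hb hx (mem_Icc.mp hn).1
          (hcond n (mem_Icc.mp hn).1)
    _ ≤ (p / (p - L)) ^ (p - 1) * (p / (p - L) * ∑ k ∈ Icc 1 N, x k ^ p) := by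
        rw [← mul_sum]
        exact mul_le_mul_of_nonneg_left (sum_Icc_sum_Icc_le_of_sum_Icc_le
          (fun k hk => Real.rpow_nonneg (hx k (mem_Icc.mp hk).1) _)
          fun k hk => hardy_column_le hp0 hLp ha hb (mem_Icc.mp hk).1 (mem_Icc.mp hk).2)
          (Real.rpow_nonneg hC.le _)
    _ = (p / (p - L)) ^ p * ∑ k ∈ Icc 1 N, x k ^ p := by
        rw [← mul_assoc, ← Real.rpow_add_one hC.ne', sub_add_cancel]

/-- Theorem 3.1' on l^p norms of factorable matrices. -/
theorem stmt_2 (p L : ℝ) (hp : 1 < p) (hL0 : 0 < L) (hLp : L < p)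
    (a b : ℕ → ℝ) (ha : ∀ n, 1 ≤ n → 0 < a n) (hb : ∀ n, 1 ≤ n → 0 < b n)
    (hab : a 1 = b 1)
    (hcond : ∀ n, 1 ≤ n →
      ∑ k ∈ Finset.Icc 1 n, (b k / a n) *
        ∏ i ∈ Finset.Icc k n, ((a i / b (i + 1) + 1 - L / p) / (a i / b i)) ^ (1 / (p - 1))
      ≤ p / (p - L))
    (x : ℕ → ℝ) (hx : ∀ n, 1 ≤ n → 0 ≤ x n)
    (hxsum : Summable fun n : ℕ => x (n + 1) ^ p) :
    ∑' n : ℕ, ENNReal.ofReal (((1 / a (n + 1)) * ∑ k ∈ Finset.Icc 1 (n + 1), b k * x k) ^ p)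
      ≤ ENNReal.ofReal ((p / (p - L)) ^ p) * ∑' n : ℕ, ENNReal.ofReal (x (n + 1) ^ p) :=
  stmt_2_general p L hp hLp a b ha hb hcond x hx hxsum
end

section
/- Let p>1 and let c be a real number with 0 ≤ c < 1. Let (λ_n)_{n≥1} be a positive real sequence with Λ_n = Σ_{k=1}^n λ_k, and let (x_n)_{n≥1} be a positive real sequence. Setting B_n = (1/Λ_n) Σ_{k=n}^∞ λ_k x_k and assuming the series on the right-hand side converges, one has Σ_{n=1}^∞ λ_n Λ_n^{p−c} B_n^p ≤ ( p/(1−c) ) Σ_{n=1}^∞ λ_n Λ_n^{p−c} x_n B_n^{p−1}. -/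
open Filter Topology
open scoped ENNReal

/-! Put `T n = ∑_{k ≥ n} λ_k x_k`, so that `B n = T n / Λ n`. The left-hand terms become
`λ_n Λ_n^{-c} T_n^p` and the right-hand terms `Λ_n^{1-c} (T_n - T_{n+1}) T_n^{p-1}`.
Concavity of `t ↦ t^{1-c}` gives `(1 - c) λ_n Λ_n^{-c} ≤ Λ_n^{1-c} - Λ_{n-1}^{1-c}`; Abel
summation (using `Λ_0 = 0` and `T_n → 0`) turns `∑ (Λ_n^{1-c} - Λ_{n-1}^{1-c}) T_n^p` into
`∑ Λ_n^{1-c} (T_n^p - T_{n+1}^p)`; and convexity of `t ↦ t^p` bounds `T_n^p - T_{n+1}^p` by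
`p (T_n - T_{n+1}) T_n^{p-1}`. Summing in `ℝ≥0∞` makes the rearrangement unconditional. -/

namespace Real

theorem rpow_sub_rpow_le_of_one_le {p a b : ℝ} (hp : 1 ≤ p) (hb : 0 ≤ b) (hba : b ≤ a) :
    a ^ p - b ^ p ≤ p * (a - b) * a ^ (p - 1) := by
  obtain rfl | ha := (hb.trans hba).eq_or_lt
  · simp [le_antisymm hba hb]
  have h := one_add_mul_self_le_rpow_one_add (s := b / a - 1)
    (by linarith [div_nonneg hb ha.le]) hp
  rw [add_sub_cancel, div_rpow hb ha.le, le_div_iff₀ (rpow_pos_of_pos ha p)] at h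
  have : p * (a - b) * a ^ (p - 1) = -(p * (b / a - 1)) * a ^ p := by
    rw [rpow_sub_one ha.ne']; field_simp; ring
  rw [this]; linarith

theorem le_rpow_sub_rpow_of_le_one {p a b : ℝ} (hp0 : 0 ≤ p) (hp1 : p ≤ 1) (hb : 0 ≤ b)
    (hba : b ≤ a) : p * (a - b) * a ^ (p - 1) ≤ a ^ p - b ^ p := by
  obtain rfl | ha := (hb.trans hba).eq_or_lt
  · simp [le_antisymm hba hb]
  have h := rpow_one_add_le_one_add_mul_self (s := b / a - 1)
    (by linarith [div_nonneg hb ha.le]) hp0 hp1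
  rw [add_sub_cancel, div_rpow hb ha.le, div_le_iff₀ (rpow_pos_of_pos ha p)] at h
  have : p * (a - b) * a ^ (p - 1) = -(p * (b / a - 1)) * a ^ p := by
    rw [rpow_sub_one ha.ne']; field_simp; ring
  rw [this]; linarith

theorem rpow_mul_div_rpow {a t : ℝ} (ha : 0 < a) (ht : 0 ≤ t) (q r : ℝ) :
    a ^ q * (t / a) ^ r = a ^ (q - r) * t ^ r := by
  rw [div_rpow ht ha.le, rpow_sub ha]; ring

end Real

theorem hasSum_sub_succ_of_antitone {G : ℕ → ℝ} (hG : Antitone G)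
    (hG0 : Tendsto G atTop (𝓝 0)) : HasSum (fun n ↦ G n - G (n + 1)) (G 0) := by
  refine (hasSum_iff_tendsto_nat_of_nonneg (fun n ↦ sub_nonneg.2 (hG n.le_succ)) _).2 ?_
  simp_rw [Finset.sum_range_sub']
  simpa using tendsto_const_nhds.sub hG0

theorem tsum_nat_add_sub_tsum_nat_add_succ {G : Type*} [AddCommGroup G] [TopologicalSpace G]
    [IsTopologicalAddGroup G] [T2Space G] {f : ℕ → G} (hf : Summable f) (n : ℕ) :
    ∑' k, f (k + n) - ∑' k, f (k + (n + 1)) = f n := by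
  rw [← sub_eq_iff_eq_add'.2 (hf.sum_add_tsum_nat_add n).symm,
    ← sub_eq_iff_eq_add'.2 (hf.sum_add_tsum_nat_add (n + 1)).symm, Finset.sum_range_succ]
  abel

namespace ENNReal

theorem tsum_mul_tsum_add_eq_tsum_sum_range_mul (u v : ℕ → ℝ≥0∞) :
    ∑' n, u n * ∑' m, v (m + n) = ∑' m, (∑ k ∈ Finset.range (m + 1), u k) * v m := by
  have tail (n : ℕ) : ∑' m, v (m + n) = ∑' m, if n ≤ m then v m else 0 := by
    rw [← ENNReal.summable.sum_add_tsum_nat_add' (f := fun m ↦ if n ≤ m then v m else 0)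
      (k := n), Finset.sum_eq_zero fun i hi ↦ if_neg (by simpa using hi)]
    simp
  calc ∑' n, u n * ∑' m, v (m + n)
      = ∑' n, ∑' m, if n ≤ m then u n * v m else 0 := by
        simp_rw [tail, ← ENNReal.tsum_mul_left, mul_ite, mul_zero]
    _ = ∑' m, ∑' n, if n ≤ m then u n * v m else 0 := ENNReal.tsum_comm
    _ = ∑' m, (∑ k ∈ Finset.range (m + 1), u k) * v m := by
        refine tsum_congr fun m ↦ ?_
        rw [tsum_eq_sum (s := Finset.range (m + 1)) (by simp +contextual),
          Finset.sum_mul]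
        exact Finset.sum_congr rfl fun k hk ↦ if_pos (Finset.mem_range_succ_iff.1 hk)

theorem tsum_ofReal_sub_mul_eq_tsum_ofReal_mul_sub {F G : ℕ → ℝ} (hF : Monotone F)
    (hF0 : F 0 = 0) (hG : Antitone G) (hG0 : Tendsto G atTop (𝓝 0)) :
    ∑' n, ENNReal.ofReal ((F (n + 1) - F n) * G n)
      = ∑' n, ENNReal.ofReal (F (n + 1) * (G n - G (n + 1))) := by
  have tail (n : ℕ) : ENNReal.ofReal (G n)
      = ∑' m, ENNReal.ofReal (G (m + n) - G (m + n + 1)) := by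
    have h := hasSum_sub_succ_of_antitone (G := fun m ↦ G (m + n))
      (fun a b hab ↦ hG (by omega)) (hG0.comp (tendsto_add_atTop_nat n))
    simp only [zero_add, add_right_comm _ 1 n] at h
    rw [← h.tsum_eq]
    exact ENNReal.ofReal_tsum_of_nonneg (fun m ↦ sub_nonneg.2 (hG (by omega))) h.summable
  have partial_sum (m : ℕ) : ∑ k ∈ Finset.range (m + 1), ENNReal.ofReal (F (k + 1) - F k)
      = ENNReal.ofReal (F (m + 1)) := by
    rw [← ENNReal.ofReal_sum_of_nonneg fun k _ ↦ sub_nonneg.2 (hF k.le_succ),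
      Finset.sum_range_sub, hF0, sub_zero]
  calc ∑' n, ENNReal.ofReal ((F (n + 1) - F n) * G n)
      = ∑' n, ENNReal.ofReal (F (n + 1) - F n)
          * ∑' m, ENNReal.ofReal (G (m + n) - G (m + n + 1)) := by
        simp_rw [ENNReal.ofReal_mul (sub_nonneg.2 (hF (Nat.le_succ _))), tail]
    _ = ∑' m, ENNReal.ofReal (F (m + 1) * (G m - G (m + 1))) := by
        rw [tsum_mul_tsum_add_eq_tsum_sum_range_mul
          (v := fun m ↦ ENNReal.ofReal (G m - G (m + 1)))]
        simp_rw [partial_sum]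
        exact tsum_congr fun m ↦ (ENNReal.ofReal_mul (hF0 ▸ hF (m + 1).zero_le)).symm

end ENNReal

theorem tsum_ofReal_sub_mul_rpow_le {p s : ℝ} (hp : 1 ≤ p) (hs0 : 0 < s) (hs1 : s ≤ 1)
    {Λ T : ℕ → ℝ} (hΛ : Monotone Λ) (hΛ0 : Λ 0 = 0) (hT : Antitone T)
    (hT0 : Tendsto T atTop (𝓝 0)) :
    ∑' n, ENNReal.ofReal ((Λ (n + 1) - Λ n) * Λ (n + 1) ^ (s - 1) * T n ^ p)
      ≤ ENNReal.ofReal (p / s) *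
        ∑' n, ENNReal.ofReal (Λ (n + 1) ^ s * (T n - T (n + 1)) * T n ^ (p - 1)) := by
  have hΛnn (n : ℕ) : 0 ≤ Λ n := hΛ0 ▸ hΛ n.zero_le
  have hTnn (n : ℕ) : 0 ≤ T n := hT.le_of_tendsto hT0 n
  have concave (n : ℕ) : (Λ (n + 1) - Λ n) * Λ (n + 1) ^ (s - 1) * T n ^ p
      ≤ s⁻¹ * ((Λ (n + 1) ^ s - Λ n ^ s) * T n ^ p) := by
    rw [le_inv_mul_iff₀ hs0, ← mul_assoc, ← mul_assoc]
    exact mul_le_mul_of_nonneg_right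
      (Real.le_rpow_sub_rpow_of_le_one hs0.le hs1 (hΛnn n) (hΛ n.le_succ))
      (Real.rpow_nonneg (hTnn n) p)
  have convex (n : ℕ) : Λ (n + 1) ^ s * (T n ^ p - T (n + 1) ^ p)
      ≤ p * (Λ (n + 1) ^ s * (T n - T (n + 1)) * T n ^ (p - 1)) := by
    have := mul_le_mul_of_nonneg_left
      (Real.rpow_sub_rpow_le_of_one_le hp (hTnn (n + 1)) (hT n.le_succ))
      (Real.rpow_nonneg (hΛnn (n + 1)) s)
    linarith
  have abel := ENNReal.tsum_ofReal_sub_mul_eq_tsum_ofReal_mul_sub (F := fun n ↦ Λ n ^ s)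
    (G := fun n ↦ T n ^ p) (fun a b hab ↦ Real.rpow_le_rpow (hΛnn a) (hΛ hab) hs0.le)
    (by simp [hΛ0, Real.zero_rpow hs0.ne'])
    (fun a b hab ↦ Real.rpow_le_rpow (hTnn b) (hT hab) (by linarith))
    (by simpa [Real.zero_rpow (by linarith : p ≠ 0)]
      using hT0.rpow_const (p := p) (Or.inr (by linarith)))
  calc ∑' n, ENNReal.ofReal ((Λ (n + 1) - Λ n) * Λ (n + 1) ^ (s - 1) * T n ^ p)
      ≤ ∑' n, ENNReal.ofReal (s⁻¹ * ((Λ (n + 1) ^ s - Λ n ^ s) * T n ^ p)) :=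
        ENNReal.tsum_le_tsum fun n ↦ ENNReal.ofReal_le_ofReal (concave n)
    _ = ENNReal.ofReal s⁻¹ *
          ∑' n, ENNReal.ofReal (Λ (n + 1) ^ s * (T n ^ p - T (n + 1) ^ p)) := by
        simp_rw [ENNReal.ofReal_mul (inv_nonneg.2 hs0.le), ENNReal.tsum_mul_left, abel]
    _ ≤ ENNReal.ofReal s⁻¹ * ∑' n,
          ENNReal.ofReal (p * (Λ (n + 1) ^ s * (T n - T (n + 1)) * T n ^ (p - 1))) := by
        gcongr ENNReal.ofReal s⁻¹ * ∑' n, ENNReal.ofReal ?_ with n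
        exact convex n
    _ = ENNReal.ofReal (p / s) *
          ∑' n, ENNReal.ofReal (Λ (n + 1) ^ s * (T n - T (n + 1)) * T n ^ (p - 1)) := by
        simp_rw [ENNReal.ofReal_mul (by linarith : 0 ≤ p), ENNReal.tsum_mul_left, ← mul_assoc,
          ← ENNReal.ofReal_mul (inv_nonneg.2 hs0.le), inv_mul_eq_div]

theorem stmt_6_general (p c : ℝ) (hp : 1 < p) (hc0 : 0 ≤ c) (hc1 : c < 1)
    (l x : ℕ → ℝ) (hl : ∀ n, 1 ≤ n → 0 < l n) (hx : ∀ n, 1 ≤ n → 0 < x n)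
    (Λ : ℕ → ℝ) (hΛ : ∀ n, Λ n = ∑ k ∈ Finset.Icc 1 n, l k)
    (hst : ∀ n, 1 ≤ n → Summable fun k : ℕ => l (n + k) * x (n + k))
    (B : ℕ → ℝ) (hB : ∀ n, 1 ≤ n → B n = (1 / Λ n) * ∑' k : ℕ, l (n + k) * x (n + k)) :
    ∑' n : ℕ, ENNReal.ofReal (l (n + 1) * Λ (n + 1) ^ (p - c) * B (n + 1) ^ p)
      ≤ ENNReal.ofReal (p / (1 - c)) *
        ∑' n : ℕ, ENNReal.ofReal
          (l (n + 1) * Λ (n + 1) ^ (p - c) * x (n + 1) * B (n + 1) ^ (p - 1)) := by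
  set f : ℕ → ℝ := fun k ↦ l (k + 1) * x (k + 1)
  set T : ℕ → ℝ := fun n ↦ ∑' k, f (k + n)
  have hf_nonneg (k : ℕ) : 0 ≤ f k := (mul_pos (hl _ k.succ_pos) (hx _ k.succ_pos)).le
  have hf : Summable f := by simpa [f, add_comm] using hst 1 le_rfl
  have hT_sub (n : ℕ) : T n - T (n + 1) = f n := tsum_nat_add_sub_tsum_nat_add_succ hf n
  have hT : Antitone T := antitone_nat_of_succ_le fun n ↦ by linarith [hT_sub n, hf_nonneg n]
  have hTnn (n : ℕ) : 0 ≤ T n := hT.le_of_tendsto (tendsto_sum_nat_add f) n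
  have hBT (n : ℕ) : B (n + 1) = T n / Λ (n + 1) := by
    rw [hB (n + 1) (by omega), one_div, inv_mul_eq_div]
    exact congrArg (· / _) (tsum_congr fun k ↦ by rw [show n + 1 + k = k + n + 1 by omega])
  have hΛ0 : Λ 0 = 0 := by simp [hΛ]
  have hΛ_sub (n : ℕ) : Λ (n + 1) - Λ n = l (n + 1) := by
    rw [hΛ, hΛ, Finset.sum_Icc_succ_top (by omega : 1 ≤ n + 1)]; ring
  have hΛmono : StrictMono Λ := strictMono_nat_of_lt_succ fun n ↦ by
    linarith [hΛ_sub n, hl (n + 1) n.succ_pos]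
  have hΛpos (n : ℕ) : 0 < Λ (n + 1) := hΛ0 ▸ hΛmono n.succ_pos
  have lhs_term (n : ℕ) : l (n + 1) * Λ (n + 1) ^ (p - c) * B (n + 1) ^ p
      = (Λ (n + 1) - Λ n) * Λ (n + 1) ^ (1 - c - 1) * T n ^ p := by
    rw [hBT, mul_assoc, Real.rpow_mul_div_rpow (hΛpos n) (hTnn n), hΛ_sub,
      show p - c - p = 1 - c - 1 by ring, mul_assoc]
  have rhs_term (n : ℕ) : l (n + 1) * Λ (n + 1) ^ (p - c) * x (n + 1) * B (n + 1) ^ (p - 1)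
      = Λ (n + 1) ^ (1 - c) * (T n - T (n + 1)) * T n ^ (p - 1) := by
    rw [hBT, hT_sub, mul_right_comm _ _ (x _), mul_assoc,
      Real.rpow_mul_div_rpow (hΛpos n) (hTnn n), show p - c - (p - 1) = 1 - c by ring]
    simp only [f]
    ring
  simp_rw [lhs_term, rhs_term]
  exact tsum_ofReal_sub_mul_rpow_le hp.le (sub_pos.2 hc1) (by linarith) hΛmono.monotone hΛ0 hT
    (tendsto_sum_nat_add f)

/-- inequality (1.90). -/
theorem stmt_6 (p c : ℝ) (hp : 1 < p) (hc0 : 0 ≤ c) (hc1 : c < 1)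
    (l x : ℕ → ℝ) (hl : ∀ n, 1 ≤ n → 0 < l n) (hx : ∀ n, 1 ≤ n → 0 < x n)
    (Λ : ℕ → ℝ) (hΛ : ∀ n, Λ n = ∑ k ∈ Finset.Icc 1 n, l k)
    (hst : ∀ n, 1 ≤ n → Summable fun k : ℕ => l (n + k) * x (n + k))
    (B : ℕ → ℝ) (hB : ∀ n, 1 ≤ n → B n = (1 / Λ n) * ∑' k : ℕ, l (n + k) * x (n + k))
    (hs : Summable fun n : ℕ =>
      l (n + 1) * Λ (n + 1) ^ (p - c) * x (n + 1) * B (n + 1) ^ (p - 1)) :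
    ∑' n : ℕ, ENNReal.ofReal (l (n + 1) * Λ (n + 1) ^ (p - c) * B (n + 1) ^ p)
      ≤ ENNReal.ofReal (p / (1 - c)) *
        ∑' n : ℕ, ENNReal.ofReal
          (l (n + 1) * Λ (n + 1) ^ (p - c) * x (n + 1) * B (n + 1) ^ (p - 1)) :=
  stmt_6_general p c hp hc0 hc1 l x hl hx Λ hΛ hst B hB
end
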